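/- arXiv:1801.04902 — 3 statements merged into one kernel-verified Lean document; each statement's English description precedes it below -/
import Mathlib

section
/- For every natural number ℓ and every α with −1 < α < 1, the eigenvalue λ_δ(ℓ) converges to the local eigenvalue as the horizon shrinks: λ_δ(ℓ) → −ℓ(ℓ+1) as δ → 0⁺. -/
open MeasureTheory Real Polynomial

/-- The ℓ-th Legendre polynomial, via Rodrigues' formula. -/
noncomputable def legendre (l : ℕ) : Polynomial ℝ :=
  (((2 : ℝ) ^ l * l.factorial)⁻¹) • ((derivative (R := ℝ)) ^ l) ((X ^ 2 - 1) ^ l)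

/-- The eigenvalue `λ_δ(ℓ)` of the nonlocal Laplace–Beltrami operator with the weakly
singular kernel with singularity strength `α` and horizon `δ`. -/
noncomputable def lambdaNL (α δ : ℝ) (l : ℕ) : ℝ :=
  2 * π * ∫ t in (1 - δ ^ 2 / 2)..1,
    ((legendre l).eval t - 1) * ((1 + α) * (2 : ℝ) ^ (1 + α) / (π * δ ^ (2 + 2 * α) * (1 - t) ^ (1 - α)))

/-!
Since `P_ℓ(1) = 1`, we can write `P_ℓ(t) - 1 = (t - 1) q(t)` with `q` a polynomial and
`q(1) = P_ℓ'(1) = ℓ(ℓ+1)/2`, the latter by Leibniz' rule applied to Rodrigues' formula for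
`(x - 1)^ℓ (x + 1)^ℓ`. The factor `t - 1` cancels the singularity of the kernel, and with
`ε = δ²/2` the normalisation of the kernel makes `λ_δ(ℓ)` exactly `-2` times the mean of `q`
against the probability density `(α + 1) ε^(-α-1) (1 - t)^α` on `[1 - ε, 1]`. As `ε → 0`
this mean tends to `q(1)` by continuity.
-/

open Filter Set Topology

namespace Polynomial

variable {R : Type*} [CommRing R]

theorem eval_iterate_derivative_X_sub_C_pow_mul (n : ℕ) (a : R) (g : R[X]) :
    (derivative^[n] ((X - C a) ^ n * g)).eval a = n.factorial * g.eval a := by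
  rw [iterate_derivative_mul, eval_finsetSum, Finset.sum_eq_single 0]
  · simp [iterate_derivative_X_sub_pow_self]
  · intro k hk hk0
    simp [iterate_derivative_X_sub_pow, Nat.sub_sub_self (Finset.mem_range_succ_iff.1 hk), hk0]
  · simp

theorem eval_iterate_derivative_succ_X_sub_C_pow_mul (n : ℕ) (a : R) (g : R[X]) :
    (derivative^[n + 1] ((X - C a) ^ n * g)).eval a =
      (n + 1).factorial * (derivative g).eval a := by
  rw [iterate_derivative_mul, eval_finsetSum, Finset.sum_eq_single 1]
  · simp [iterate_derivative_X_sub_pow_self, Nat.factorial_succ]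
    ring
  · intro k hk hk1
    rcases Nat.eq_zero_or_pos k with rfl | hk0
    · simp [iterate_derivative_X_sub_pow]
    · have : n - (n + 1 - k) ≠ 0 := by have := Finset.mem_range_succ_iff.1 hk; omega
      simp [iterate_derivative_X_sub_pow, this]
  · simp

theorem eval_sub_eval_eq_mul_eval_divByMonic (p : R[X]) (a t : R) :
    p.eval t - p.eval a = (t - a) * (p /ₘ (X - C a)).eval t := by
  have h := congrArg (eval t) (X_sub_C_mul_divByMonic_eq_sub_modByMonic p a)
  simpa [modByMonic_X_sub_C_eq_C_eval] using h.symm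

theorem eval_divByMonic_X_sub_C_self (p : R[X]) (a : R) :
    (p /ₘ (X - C a)).eval a = (derivative p).eval a := by
  simpa using congrArg (eval a) (divByMonic_add_X_sub_C_mul_derivative_divByMonic_eq_derivative p a)

end Polynomial

theorem legendre_eq_smul_iterate_derivative (l : ℕ) :
    legendre l = ((2 : ℝ) ^ l * l.factorial)⁻¹ •
      derivative^[l] ((X - C 1) ^ l * (X + C 1) ^ l) := by
  rw [legendre, Module.End.pow_apply, ← mul_pow, C_1]
  ring_nf

theorem legendre_eval_one (l : ℕ) : (legendre l).eval 1 = 1 := by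
  rw [legendre_eq_smul_iterate_derivative, eval_smul, eval_iterate_derivative_X_sub_C_pow_mul]
  simp only [eval_pow, eval_add, eval_X, eval_C, smul_eq_mul]
  field_simp
  norm_num

theorem legendre_derivative_eval_one (l : ℕ) :
    (derivative (legendre l)).eval 1 = l * (l + 1) / 2 := by
  rw [legendre_eq_smul_iterate_derivative, derivative_smul,
    ← Function.iterate_succ_apply' derivative, eval_smul, eval_iterate_derivative_succ_X_sub_C_pow_mul, derivative_X_add_C_pow]
  simp only [eval_mul, eval_pow, eval_add, eval_X, eval_C, smul_eq_mul, Nat.factorial_succ]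
  cases l with
  | zero => simp
  | succ n =>
    simp only [Nat.add_sub_cancel, pow_succ]
    push_cast
    field_simp
    ring

noncomputable def endpointAverage (α ε : ℝ) (f : ℝ → ℝ) : ℝ :=
  (α + 1) / ε ^ (α + 1) * ∫ t in (1 - ε)..1, f t * (1 - t) ^ α

section

variable {α : ℝ}

theorem integral_one_sub_rpow (hα : -1 < α) (ε : ℝ) :
    ∫ t in (1 - ε)..1, (1 - t) ^ α = ε ^ (α + 1) / (α + 1) := by
  rw [intervalIntegral.integral_comp_sub_left (fun u : ℝ => u ^ α) 1, sub_self, sub_sub_cancel,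
    integral_rpow (Or.inl hα), zero_rpow (by linarith), sub_zero]

theorem intervalIntegrable_mul_one_sub_rpow (hα : -1 < α) {f : ℝ → ℝ} (hf : Continuous f)
    (a b : ℝ) : IntervalIntegrable (fun t => f t * (1 - t) ^ α) volume a b := by
  have h : IntervalIntegrable (fun t : ℝ => (1 - t) ^ α) volume a b := by
    simpa using
      (intervalIntegral.intervalIntegrable_rpow' (a := 1 - a) (b := 1 - b) hα).comp_sub_left 1
  exact h.continuousOn_mul hf.continuousOn

theorem endpointAverage_sub_eq (hα : -1 < α) {ε : ℝ} (hε : 0 < ε) {f : ℝ → ℝ}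
    (hf : Continuous f) (c : ℝ) :
    endpointAverage α ε f - c =
      (α + 1) / ε ^ (α + 1) * ∫ t in (1 - ε)..1, (f t - c) * (1 - t) ^ α := by
  have hα' : α + 1 ≠ 0 := by linarith
  have hεα : ε ^ (α + 1) ≠ 0 := (rpow_pos_of_pos hε _).ne'
  simp_rw [sub_mul]
  rw [endpointAverage,
    intervalIntegral.integral_sub (intervalIntegrable_mul_one_sub_rpow hα hf _ _)
    (intervalIntegrable_mul_one_sub_rpow hα continuous_const _ _),
    intervalIntegral.integral_const_mul, integral_one_sub_rpow hα]
  field_simp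

theorem abs_endpointAverage_sub_le (hα : -1 < α) {ε : ℝ} (hε : 0 < ε) {f : ℝ → ℝ}
    (hf : Continuous f) {M : ℝ} (hM : ∀ t ∈ Ioc (1 - ε) 1, |f t - f 1| ≤ M) :
    |endpointAverage α ε f - f 1| ≤ M := by
  have hα' : 0 < α + 1 := by linarith
  have hεα : 0 < ε ^ (α + 1) := rpow_pos_of_pos hε _
  have hbound :
      |∫ t in (1 - ε)..1, (f t - f 1) * (1 - t) ^ α| ≤ M * (ε ^ (α + 1) / (α + 1)) := by
    rw [← Real.norm_eq_abs, ← integral_one_sub_rpow hα ε,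
      ← intervalIntegral.integral_const_mul M fun t => (1 - t) ^ α]
    refine intervalIntegral.norm_integral_le_of_norm_le (by linarith) (ae_of_all _ fun t ht => ?_)
      (intervalIntegrable_mul_one_sub_rpow hα continuous_const _ _)
    have hw : 0 ≤ (1 - t) ^ α := rpow_nonneg (by linarith [ht.2]) _
    rw [norm_mul, Real.norm_eq_abs, Real.norm_of_nonneg hw]
    exact mul_le_mul_of_nonneg_right (hM t ht) hw
  rw [endpointAverage_sub_eq hα hε hf, abs_mul, abs_of_pos (div_pos hα' hεα)]
  calc (α + 1) / ε ^ (α + 1) * |∫ t in (1 - ε)..1, (f t - f 1) * (1 - t) ^ α|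
      ≤ (α + 1) / ε ^ (α + 1) * (M * (ε ^ (α + 1) / (α + 1))) := by gcongr
    _ = M := by field_simp

theorem tendsto_endpointAverage (hα : -1 < α) {f : ℝ → ℝ} (hf : Continuous f) :
    Tendsto (fun ε => endpointAverage α ε f) (𝓝[>] 0) (𝓝 (f 1)) := by
  rw [Metric.tendsto_nhdsWithin_nhds]
  intro η hη
  obtain ⟨ρ, hρ, hfρ⟩ := Metric.continuous_iff.1 hf 1 (η / 2) (half_pos hη)
  refine ⟨ρ, hρ, fun ε hε hερ => ?_⟩
  rw [Real.dist_eq, sub_zero, abs_of_pos hε] at hερ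
  refine (abs_endpointAverage_sub_le hα hε hf fun t ht => ?_).trans_lt (half_lt_self hη)
  refine (hfρ t ?_).le
  rw [Real.dist_eq, abs_sub_lt_iff]
  constructor <;> linarith [ht.1, ht.2]

theorem integral_sub_one_mul_mul_div_rpow {a : ℝ} (ha : a ≤ 1) (g : ℝ → ℝ) (c d : ℝ) :
    ∫ t in a..1, (t - 1) * g t * (c / (d * (1 - t) ^ (1 - α))) =
      -(c / d) * ∫ t in a..1, g t * (1 - t) ^ α := by
  rw [← intervalIntegral.integral_const_mul]
  refine intervalIntegral.integral_congr_ae ?_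
  filter_upwards [Measure.ae_ne volume 1] with t ht1 ht
  rw [uIoc_of_le ha] at ht
  have hpos : 0 < 1 - t := sub_pos.2 (lt_of_le_of_ne ht.2 ht1)
  have hsplit : (1 - t) ^ α = (1 - t) / (1 - t) ^ (1 - α) := by
    rw [eq_div_iff (rpow_pos_of_pos hpos _).ne', ← rpow_add hpos, add_sub_cancel, rpow_one]
  rw [hsplit]
  field_simp
  ring

theorem lambdaNL_eq_endpointAverage {l : ℕ} {q : ℝ → ℝ}
    (hq : ∀ t, (legendre l).eval t - 1 = (t - 1) * q t) {δ : ℝ} (hδ : 0 < δ) :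
    lambdaNL α δ l = -2 * endpointAverage α (δ ^ 2 / 2) q := by
  have hscale : (δ ^ 2 / 2) ^ (α + 1) = δ ^ (2 + 2 * α) / 2 ^ (1 + α) := by
    rw [div_rpow (sq_nonneg δ) zero_le_two, ← rpow_natCast, ← rpow_mul hδ.le]
    ring_nf
  simp only [lambdaNL, endpointAverage, hq]
  rw [integral_sub_one_mul_mul_div_rpow (by linarith [sq_nonneg δ]), hscale]
  have : (0:ℝ) < δ ^ (2 + 2 * α) := rpow_pos_of_pos hδ _
  have : (0:ℝ) < 2 ^ (1 + α) := rpow_pos_of_pos two_pos _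
  field_simp
  ring

end

theorem lambda_tendsto_local_general (l : ℕ) (α : ℝ) (hα : -1 < α) :
    Filter.Tendsto (fun δ : ℝ => lambdaNL α δ l) (nhdsWithin 0 (Set.Ioi 0))
      (nhds (-((l : ℝ) * ((l : ℝ) + 1)))) := by
  set q := legendre l /ₘ (X - C 1)
  have hq : ∀ t, (legendre l).eval t - 1 = (t - 1) * q.eval t := fun t => by
    rw [← eval_sub_eval_eq_mul_eval_divByMonic, legendre_eval_one]
  have hq1 : -2 * q.eval 1 = -((l : ℝ) * ((l : ℝ) + 1)) := by
    rw [eval_divByMonic_X_sub_C_self, legendre_derivative_eval_one]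
    ring
  have hscale : Tendsto (fun δ : ℝ => δ ^ 2 / 2) (𝓝[>] 0) (𝓝[>] 0) := by
    refine tendsto_nhdsWithin_of_tendsto_nhds_of_eventually_within _ ?_ ?_
    · exact ((continuous_pow 2).div_const 2).tendsto' 0 0 (by simp) |>.mono_left nhdsWithin_le_nhds
    · filter_upwards [self_mem_nhdsWithin] with δ (hδ : 0 < δ)
      exact div_pos (pow_pos hδ 2) two_pos
  rw [← hq1]
  refine (((tendsto_endpointAverage hα q.continuous).comp hscale).const_mul (-2)).congr' ?_
  filter_upwards [self_mem_nhdsWithin] with δ hδ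
  exact (lambdaNL_eq_endpointAverage hq hδ).symm

/-- `λ_δ(ℓ) → −ℓ(ℓ+1)` as `δ → 0⁺`. -/
theorem lambda_tendsto_local (l : ℕ) (α : ℝ) (hα : -1 < α) (hα1 : α < 1) :
    Filter.Tendsto (fun δ : ℝ => lambdaNL α δ l) (nhdsWithin 0 (Set.Ioi 0))
      (nhds (-((l : ℝ) * ((l : ℝ) + 1)))) :=
  lambda_tendsto_local_general l α hα
end

section
/- For every natural number ℓ, ∫_{−1}^{1} (P_ℓ(t) − 1)·(1−t)^{−3/2} dt = −2^{3/2}·ℓ. Equivalently, for the kernel parameters α = −1/2 and δ = 2 the eigenvalue of the nonlocal Laplace–Beltrami operator is λ_2(ℓ) = −2ℓ. -/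
open MeasureTheory Real Polynomial

/-!
Substituting `t = 1 - 2u²` turns the singular integral into `-2^{3/2} J(q)`, where
`q = (P_ℓ - 1)/(X - 1)` is a polynomial and `J(p) = ∫₀¹ p(1 - 2u²) du` (`weightedIntegral`).
Integrating `d/du [u p(1 - 2u²)]` gives `J(p + 2(X - 1)p') = p(-1)` for every polynomial `p`.
Applied to `q` this yields `J(q) = 2 J(P_ℓ') + (P_ℓ(-1) - 1)/2`; applied to `P_{ℓ+1} + P_ℓ`,
together with the classical recurrences derived from Rodrigues' formula, it yields
`J(P_ℓ) = 1/(2ℓ+1)` and then `J(P_ℓ') = (2ℓ + 1 - (-1)^ℓ)/4`. Hence `J(q) = ℓ`.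
-/

namespace Polynomial

variable {R : Type*} [CommRing R]

theorem iterate_derivative_X_sq_sub_one_mul (n : ℕ) (p : R[X]) :
    derivative^[n + 1] ((X ^ 2 - 1) * p) =
      (X ^ 2 - 1) * derivative^[n + 1] p + (2 * (n + 1) : R[X]) * X * derivative^[n] p +
        ((n + 1) * n : R[X]) * derivative^[n - 1] p := by
  have h : (X ^ 2 - 1) * p = p * X * X - p := by ring
  rw [h, iterate_map_sub, iterate_derivative_mul_X, iterate_derivative_mul_X,
    add_tsub_cancel_right, iterate_derivative_mul_X]
  simp only [nsmul_eq_mul]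
  push_cast
  ring

theorem iterate_derivative_X_sq_sub_one_pow_succ (n : ℕ) :
    derivative^[n + 1] (((X : R[X]) ^ 2 - 1) ^ (n + 1)) =
      (2 * (n + 1) : R[X]) * (X * derivative^[n] (((X : R[X]) ^ 2 - 1) ^ n) +
        (n : R[X]) * derivative^[n - 1] (((X : R[X]) ^ 2 - 1) ^ n)) := by
  have h : derivative (((X : R[X]) ^ 2 - 1) ^ (n + 1)) =
      ((2 * (n + 1) : ℕ) : R[X]) * ((X ^ 2 - 1) ^ n * X) := by
    rw [derivative_pow]
    simp only [Nat.cast_add, Nat.cast_one, map_add, map_natCast, map_one, add_tsub_cancel_right,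
      derivative_sub, derivative_X_pow_succ, pow_one, derivative_one, sub_zero, Nat.cast_mul,
      Nat.cast_ofNat]
    ring
  rw [Function.iterate_succ_apply, h, iterate_derivative_natCast_mul, iterate_derivative_mul_X,
    nsmul_eq_mul]
  push_cast
  ring

end Polynomial

noncomputable def legendreAntideriv (l : ℕ) : ℝ[X] :=
  C ((2 ^ l * l.factorial : ℝ)⁻¹) * derivative^[l - 1] ((X ^ 2 - 1) ^ l)

theorem legendre_eq_C_mul_iterate_derivative (l : ℕ) :
    legendre l = C ((2 ^ l * l.factorial : ℝ)⁻¹) * derivative^[l] ((X ^ 2 - 1) ^ l) := by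
  rw [legendre, Module.End.pow_apply, smul_eq_C_mul]

theorem legendre_zero : legendre 0 = 1 := by
  simp [legendre_eq_C_mul_iterate_derivative]

theorem derivative_legendreAntideriv {l : ℕ} (hl : l ≠ 0) :
    derivative (legendreAntideriv l) = legendre l := by
  obtain ⟨k, rfl⟩ := Nat.exists_eq_add_one_of_ne_zero hl
  rw [legendreAntideriv, derivative_C_mul, add_tsub_cancel_right,
    ← Function.iterate_succ_apply' derivative, legendre_eq_C_mul_iterate_derivative]

theorem legendre_succ (l : ℕ) :
    legendre (l + 1) = X * legendre l + (l : ℝ[X]) * legendreAntideriv l := by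
  have hc : ((2 : ℝ) ^ (l + 1) * (l + 1).factorial)⁻¹ * (2 * (l + 1)) =
      (2 ^ l * l.factorial : ℝ)⁻¹ := by
    rw [Nat.factorial_succ]
    push_cast
    field_simp
    ring
  rw [legendre_eq_C_mul_iterate_derivative, legendre_eq_C_mul_iterate_derivative,
    legendreAntideriv, iterate_derivative_X_sq_sub_one_pow_succ, ← hc]
  simp only [map_mul, map_add, map_ofNat, map_natCast, map_one]
  ring

theorem X_sq_sub_one_mul_derivative_legendre (l : ℕ) :
    (X ^ 2 - 1) * derivative (legendre l) = (l * (l + 1) : ℝ[X]) * legendreAntideriv l := by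
  have key := iterate_derivative_X_sq_sub_one_mul l (((X : ℝ[X]) ^ 2 - 1) ^ l)
  rw [← pow_succ', iterate_derivative_X_sq_sub_one_pow_succ] at key
  rw [legendre_eq_C_mul_iterate_derivative, legendreAntideriv, derivative_C_mul,
    ← Function.iterate_succ_apply' derivative, Nat.succ_eq_add_one]
  linear_combination -(C ((2 ^ l * l.factorial : ℝ)⁻¹)) * key

theorem legendre_one : legendre 1 = X := by
  simpa [legendre_zero] using legendre_succ 0

theorem legendre_eval_of_sq_eq_one {x : ℝ} (hx : x ^ 2 = 1) (l : ℕ) :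
    (legendre l).eval x = x ^ l := by
  induction l with
  | zero => simp [legendre_zero]
  | succ l ih =>
    have hA : (l : ℝ) * (legendreAntideriv l).eval x = 0 := by
      have h := congrArg (eval x) (X_sq_sub_one_mul_derivative_legendre l)
      simp only [eval_mul, eval_sub, eval_pow, eval_X, eval_one, eval_add, eval_natCast, hx,
        sub_self, zero_mul] at h
      have h' : ((l : ℝ) + 1) * ((l : ℝ) * (legendreAntideriv l).eval x) = 0 := by
        linear_combination -h
      exact (mul_eq_zero.1 h').resolve_left (by positivity)
    rw [legendre_succ, eval_add, eval_mul, eval_mul, eval_X, eval_natCast, ih, hA, pow_succ]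
    ring

theorem derivative_legendre_succ (l : ℕ) :
    derivative (legendre (l + 1)) =
      X * derivative (legendre l) + (l + 1 : ℝ[X]) * legendre l := by
  have hA : (l : ℝ[X]) * derivative (legendreAntideriv l) = l * legendre l := by
    rcases eq_or_ne l 0 with rfl | hl
    · simp
    · rw [derivative_legendreAntideriv hl]
  rw [legendre_succ, derivative_add, derivative_mul, derivative_X, derivative_natCast_mul, hA]
  ring

theorem X_mul_derivative_legendre_succ (l : ℕ) :
    X * derivative (legendre (l + 1)) - derivative (legendre l) =
      (l + 1 : ℝ[X]) * legendre (l + 1) := by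
  linear_combination X * derivative_legendre_succ l - (l + 1 : ℝ[X]) * legendre_succ l +
    X_sq_sub_one_mul_derivative_legendre l

theorem X_sub_one_mul_derivative_legendre_succ_add (l : ℕ) :
    (X - 1) * (derivative (legendre (l + 1)) + derivative (legendre l)) =
      (l + 1 : ℝ[X]) * (legendre (l + 1) - legendre l) := by
  linear_combination X_mul_derivative_legendre_succ l - derivative_legendre_succ l

theorem derivative_legendre_add_two_sub (l : ℕ) :
    derivative (legendre (l + 2)) - derivative (legendre l) =
      (2 * l + 3 : ℝ[X]) * legendre (l + 1) := by
  have h := derivative_legendre_succ (l + 1)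
  push_cast at h
  linear_combination h + X_mul_derivative_legendre_succ l

/-- `2^{-3/2} ∫_{-1}^{1} p(t) (1 - t)^{-1/2} dt`, written after substituting `t = 1 - 2u²`. -/
noncomputable def weightedIntegral : ℝ[X] →ₗ[ℝ] ℝ where
  toFun p := ∫ u in (0 : ℝ)..1, p.eval (1 - 2 * u ^ 2)
  map_add' p q := by
    simp only [eval_add]
    exact intervalIntegral.integral_add (Continuous.intervalIntegrable (by fun_prop) _ _)
      (Continuous.intervalIntegrable (by fun_prop) _ _)
  map_smul' c p := by
    simp only [eval_smul, smul_eq_mul, intervalIntegral.integral_const_mul, RingHom.id_apply]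

theorem weightedIntegral_apply (p : ℝ[X]) :
    weightedIntegral p = ∫ u in (0 : ℝ)..1, p.eval (1 - 2 * u ^ 2) :=
  rfl

theorem weightedIntegral_add_two_mul_X_sub_one_mul_derivative (q : ℝ[X]) :
    weightedIntegral (q + 2 * (X - 1) * derivative q) = q.eval (-1) := by
  have hderiv (u : ℝ) : HasDerivAt (fun u => u * q.eval (1 - 2 * u ^ 2))
      ((q + 2 * (X - 1) * derivative q).eval (1 - 2 * u ^ 2)) u := by
    refine ((hasDerivAt_id' u).mul ((q.hasDerivAt _).comp u
      (((hasDerivAt_pow 2 u).const_mul 2).const_sub 1))).congr_deriv ?_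
    simp only [Function.comp_apply, one_mul, Nat.cast_ofNat, Nat.add_one_sub_one, pow_one,
      eval_add, eval_mul, eval_ofNat, eval_sub, eval_X, eval_one]
    ring
  rw [weightedIntegral_apply, intervalIntegral.integral_eq_sub_of_hasDerivAt (fun u _ => hderiv u)
    (Continuous.intervalIntegrable (by fun_prop) _ _)]
  norm_num

theorem weightedIntegral_legendre_succ (l : ℕ) :
    (2 * l + 3) * weightedIntegral (legendre (l + 1)) =
      (2 * l + 1) * weightedIntegral (legendre l) := by
  have h := weightedIntegral_add_two_mul_X_sub_one_mul_derivative (legendre (l + 1) + legendre l)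
  have hpoly : legendre (l + 1) + legendre l +
      2 * (X - 1) * derivative (legendre (l + 1) + legendre l) =
        (2 * l + 3 : ℝ) • legendre (l + 1) - (2 * l + 1 : ℝ) • legendre l := by
    rw [derivative_add, mul_assoc, X_sub_one_mul_derivative_legendre_succ_add]
    simp only [smul_eq_C_mul, map_add, map_mul, map_ofNat, map_natCast, map_one]
    ring
  rw [hpoly, map_sub, map_smul, map_smul, eval_add, legendre_eval_of_sq_eq_one (by norm_num),
    legendre_eval_of_sq_eq_one (by norm_num), pow_succ] at h
  simp only [smul_eq_mul] at h
  linear_combination h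

theorem weightedIntegral_legendre (l : ℕ) : weightedIntegral (legendre l) = 1 / (2 * l + 1) := by
  induction l with
  | zero => simp [legendre_zero, weightedIntegral_apply]
  | succ l ih =>
    have h := weightedIntegral_legendre_succ l
    rw [ih] at h
    push_cast
    field_simp at h ⊢
    linear_combination h

theorem weightedIntegral_derivative_legendre_add_two (l : ℕ) :
    weightedIntegral (derivative (legendre (l + 2))) =
      weightedIntegral (derivative (legendre l)) + 1 := by
  rw [← sub_eq_iff_eq_add', ← map_sub, derivative_legendre_add_two_sub]
  have hsmul :
      (2 * l + 3 : ℝ[X]) * legendre (l + 1) = (2 * l + 3 : ℝ) • legendre (l + 1) := by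
    simp only [smul_eq_C_mul, map_add, map_mul, map_ofNat, map_natCast]
  rw [hsmul, map_smul, weightedIntegral_legendre, smul_eq_mul]
  push_cast
  field_simp
  ring

theorem weightedIntegral_derivative_legendre (l : ℕ) :
    weightedIntegral (derivative (legendre l)) = (2 * l + 1 - (-1) ^ l) / 4 := by
  induction l using Nat.twoStepInduction with
  | zero => simp [legendre_zero]
  | one => norm_num [legendre_one, weightedIntegral_apply]
  | more l ih _ =>
    rw [weightedIntegral_derivative_legendre_add_two, ih]
    push_cast
    ring

theorem weightedIntegral_of_sub_eq_X_sub_one_mul {p q : ℝ[X]}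
    (h : p - C (p.eval 1) = (X - 1) * q) :
    weightedIntegral q = 2 * weightedIntegral (derivative p) + (p.eval (-1) - p.eval 1) / 2 := by
  have hderiv : derivative p = q + (X - 1) * derivative q := by
    simpa using congrArg derivative h
  have hpoly : q + 2 * (X - 1) * derivative q = (2 : ℝ) • derivative p - q := by
    rw [smul_eq_C_mul, hderiv, map_ofNat]
    ring
  have heval : p.eval (-1) - p.eval 1 = -2 * q.eval (-1) := by
    have h' := congrArg (eval (-1)) h
    simp only [eval_sub, eval_C, eval_mul, eval_X, eval_one] at h'
    linear_combination h'
  have hftc := weightedIntegral_add_two_mul_X_sub_one_mul_derivative q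
  rw [hpoly, map_sub, map_smul, smul_eq_mul] at hftc
  linear_combination -hftc - heval / 2

theorem integral_neg_one_one_eq_integral_comp_one_sub_two_mul_sq (f : ℝ → ℝ) :
    ∫ t in (-1 : ℝ)..1, f t = ∫ u in (0 : ℝ)..1, 4 * u * f (1 - 2 * u ^ 2) := by
  have himage : (fun u : ℝ => 1 - 2 * u ^ 2) '' Set.Ioo 0 1 = Set.Ioo (-1) 1 := by
    ext t
    constructor
    · rintro ⟨u, ⟨hu0, hu1⟩, rfl⟩
      constructor <;> nlinarith
    · rintro ⟨ht1, ht2⟩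
      refine ⟨√((1 - t) / 2), ⟨by positivity, ?_⟩, ?_⟩
      · rw [Real.sqrt_lt' one_pos]; linarith
      · simp only
        rw [Real.sq_sqrt (by linarith)]
        ring
  have hinj : Set.InjOn (fun u : ℝ => 1 - 2 * u ^ 2) (Set.Ioo 0 1) := by
    intro a ha b hb hab
    have hsq : a ^ 2 = b ^ 2 := by simp only at hab; linarith
    exact (pow_left_inj₀ ha.1.le hb.1.le two_ne_zero).1 hsq
  have hderiv : ∀ u ∈ Set.Ioo (0 : ℝ) 1,
      HasDerivWithinAt (fun u : ℝ => 1 - 2 * u ^ 2) (-4 * u) (Set.Ioo 0 1) u := by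
    intro u _
    refine (((hasDerivAt_pow 2 u).const_mul 2).const_sub 1).hasDerivWithinAt.congr_deriv ?_
    ring
  have hcov := integral_image_eq_integral_abs_deriv_smul measurableSet_Ioo hderiv hinj f
  rw [himage] at hcov
  rw [intervalIntegral.integral_of_le (by norm_num), intervalIntegral.integral_of_le zero_le_one,
    integral_Ioc_eq_integral_Ioo, integral_Ioc_eq_integral_Ioo, hcov]
  refine setIntegral_congr_fun measurableSet_Ioo fun u hu => ?_
  rw [smul_eq_mul, abs_of_nonpos (by nlinarith [hu.1])]
  ring

theorem integral_sub_eval_one_mul_one_sub_rpow_neg_three_halves {p q : ℝ[X]}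
    (h : p - C (p.eval 1) = (X - 1) * q) :
    ∫ t in (-1 : ℝ)..1, (p.eval t - p.eval 1) * (1 - t) ^ (-(3 : ℝ) / 2) =
      -2 ^ ((3 : ℝ) / 2) * weightedIntegral q := by
  have hc : ((2 : ℝ) ^ ((3 : ℝ) / 2)) ^ 2 = 8 := by
    rw [← Real.rpow_natCast, ← Real.rpow_mul zero_le_two]
    norm_num
  rw [integral_neg_one_one_eq_integral_comp_one_sub_two_mul_sq, weightedIntegral_apply,
    ← intervalIntegral.integral_const_mul]
  refine intervalIntegral.integral_congr_ae (Filter.Eventually.of_forall fun u hu => ?_)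
  rw [Set.uIoc_of_le zero_le_one] at hu
  have hu0 : 0 < u := hu.1
  have hfactor : p.eval (1 - 2 * u ^ 2) - p.eval 1 = -2 * u ^ 2 * q.eval (1 - 2 * u ^ 2) := by
    have h' := congrArg (eval (1 - 2 * u ^ 2)) h
    simp only [eval_sub, eval_C, eval_mul, eval_X, eval_one] at h'
    linear_combination h'
  have hpow : (1 - (1 - 2 * u ^ 2)) ^ (-(3 : ℝ) / 2) = (2 ^ ((3 : ℝ) / 2) * u ^ 3)⁻¹ := by
    rw [sub_sub_cancel, neg_div, Real.rpow_neg (by positivity),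
      Real.mul_rpow zero_le_two (by positivity), ← Real.rpow_natCast u 2,
      ← Real.rpow_mul hu0.le]
    norm_num
  rw [hfactor, hpow]
  generalize q.eval (1 - 2 * u ^ 2) = Q
  field_simp
  linear_combination Q * hc

theorem integral_legendre_sub_one_mul_one_sub_rpow_neg_three_halves (l : ℕ) :
    ∫ t in (-1 : ℝ)..1, ((legendre l).eval t - 1) * (1 - t) ^ (-(3 : ℝ) / 2) =
      -2 ^ ((3 : ℝ) / 2) * l := by
  have heval (x : ℝ) (hx : x ^ 2 = 1) := legendre_eval_of_sq_eq_one hx l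
  obtain ⟨q, hq⟩ := X_sub_C_dvd_sub_C_eval (p := legendre l) (a := 1)
  rw [map_one] at hq
  have hI := integral_sub_eval_one_mul_one_sub_rpow_neg_three_halves hq
  rw [heval 1 (by norm_num), one_pow] at hI
  rw [hI, weightedIntegral_of_sub_eq_X_sub_one_mul hq, weightedIntegral_derivative_legendre,
    heval 1 (by norm_num), heval (-1) (by norm_num)]
  ring

theorem lambdaNL_eq_mul_integral (α δ : ℝ) (l : ℕ) :
    lambdaNL α δ l = 2 * (1 + α) * 2 ^ (1 + α) / δ ^ (2 + 2 * α) *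
      ∫ t in (1 - δ ^ 2 / 2)..1, ((legendre l).eval t - 1) * (1 - t) ^ (α - 1) := by
  rw [lambdaNL, ← intervalIntegral.integral_const_mul, ← intervalIntegral.integral_const_mul]
  refine intervalIntegral.integral_congr_ae (Filter.Eventually.of_forall fun t ht => ?_)
  rw [Set.uIoc_of_le (by linarith [sq_nonneg δ])] at ht
  rw [show α - 1 = -(1 - α) by ring, Real.rpow_neg (by linarith [ht.2])]
  linear_combination (2 * (1 + α) * 2 ^ (1 + α) * ((legendre l).eval t - 1) *
    (δ ^ (2 + 2 * α))⁻¹ * ((1 - t) ^ (1 - α))⁻¹) * mul_inv_cancel₀ pi_ne_zero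

/-- `∫_{−1}^{1} (P_ℓ(t) − 1)·(1−t)^{−3/2} dt = −2^{3/2}·ℓ`; equivalently, for `α = −1/2`
and `δ = 2` the eigenvalue of the nonlocal Laplace–Beltrami operator is `λ_2(ℓ) = −2ℓ`. -/
theorem eigenvalue_whole_sphere (l : ℕ) :
    (∫ t in (-1 : ℝ)..1, ((legendre l).eval t - 1) * (1 - t) ^ (-(3 : ℝ) / 2))
        = -(2 : ℝ) ^ ((3 : ℝ) / 2) * l ∧
      lambdaNL (-1 / 2) 2 l = -2 * l := by
  have hI := integral_legendre_sub_one_mul_one_sub_rpow_neg_three_halves l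
  refine ⟨hI, ?_⟩
  have h4 : (2 : ℝ) ^ ((1 : ℝ) / 2) * 2 ^ ((3 : ℝ) / 2) = 4 := by
    rw [← Real.rpow_add two_pos]
    norm_num
  rw [lambdaNL_eq_mul_integral, show (1 : ℝ) - 2 ^ 2 / 2 = -1 by norm_num,
    show (-1 / 2 : ℝ) - 1 = -3 / 2 by norm_num, hI, show (1 + -1 / 2 : ℝ) = 1 / 2 by norm_num,
    show (2 + 2 * (-1 / 2) : ℝ) = 1 by norm_num, Real.rpow_one]
  linear_combination -(l : ℝ) / 2 * h4
end

section
/- Let α, β > −1 and let μ_ℓ^{(α,β)} = ∫_{−1}^{1} T_ℓ(x)·(1−x)^α·(1+x)^β dx be the modified Chebyshev moments of the Jacobi weight. Then for every natural number ℓ ≥ 1, the three-term recurrence (α+β+ℓ+2)·μ_{ℓ+1}^{(α,β)} + 2(α−β)·μ_ℓ^{(α,β)} + (α+β−ℓ+2)·μ_{ℓ−1}^{(α,β)} = 0 holds. -/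
/-!
Integrate the derivative of `(1 - x)^(α+1) (1 + x)^(β+1) T_ℓ(x)` over `[-1, 1]`: it vanishes at both
ends because `α + 1, β + 1 > 0`, so the integral is `0`. The derivative is the Jacobi weight times
`((β+1)(1-x) - (α+1)(1+x)) T_ℓ + (1-x²) T_ℓ'`, and `(1-x²) T_ℓ' = ℓ (T_{ℓ-1} - x T_ℓ)` together with
`2x T_ℓ = T_{ℓ+1} + T_{ℓ-1}` turns this factor into a combination of `T_{ℓ+1}, T_ℓ, T_{ℓ-1}`.
The recurrence holds for every integer index, with `T_{-n} = T_n`.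
-/

open MeasureTheory Real Polynomial

/-- The modified Chebyshev moments of the Jacobi weight `(1-x)^α (1+x)^β`. -/
noncomputable def chebMoment (α β : ℝ) (l : ℕ) : ℝ :=
  ∫ x in (-1 : ℝ)..1, (Polynomial.Chebyshev.T ℝ (l : ℤ)).eval x * (1 - x) ^ α * (1 + x) ^ β

namespace Polynomial.Chebyshev

theorem one_sub_X_sq_mul_derivative_T (R : Type*) [CommRing R] (n : ℤ) :
    (1 - X ^ 2) * derivative (T R n) = (n : R[X]) * (T R (n - 1) - X * T R n) := by
  simpa using one_sub_X_sq_mul_derivative_T_eq_poly_in_T (R := R) (n - 1)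

end Polynomial.Chebyshev

open Polynomial.Chebyshev

noncomputable def jacobiWeight (α β x : ℝ) : ℝ := (1 - x) ^ α * (1 + x) ^ β

noncomputable def chebMomentInt (α β : ℝ) (n : ℤ) : ℝ :=
  ∫ x in (-1 : ℝ)..1, (T ℝ n).eval x * jacobiWeight α β x

theorem chebMoment_eq_chebMomentInt (α β : ℝ) (l : ℕ) :
    chebMoment α β l = chebMomentInt α β l := by
  simp only [chebMoment, chebMomentInt, jacobiWeight, mul_assoc]

section Jacobi

variable {α β : ℝ}

theorem intervalIntegrable_jacobiWeight (hα : -1 < α) (hβ : -1 < β) :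
    IntervalIntegrable (jacobiWeight α β) volume (-1) 1 := by
  have left : IntervalIntegrable (jacobiWeight α β) volume (-1) 0 := by
    have h : IntervalIntegrable (fun x => (1 + x) ^ β) volume (-1) 0 := by
      simpa [add_comm] using
        (intervalIntegral.intervalIntegrable_rpow' (a := 0) (b := 1) hβ).comp_add_right 1
    refine h.continuousOn_mul (g := fun x => (1 - x) ^ α) <|
      ContinuousOn.rpow_const (by fun_prop) fun x hx => Or.inl ?_
    rw [Set.uIcc_of_le (by norm_num)] at hx
    linarith [hx.2]
  have right : IntervalIntegrable (jacobiWeight α β) volume 0 1 := by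
    have h : IntervalIntegrable (fun x => (1 - x) ^ α) volume 0 1 := by
      simpa using
        ((intervalIntegral.intervalIntegrable_rpow' (a := 0) (b := 1) hα).comp_sub_left 1).symm
    refine h.mul_continuousOn (g := fun x => (1 + x) ^ β) <|
      ContinuousOn.rpow_const (by fun_prop) fun x hx => Or.inl ?_
    rw [Set.uIcc_of_le (by norm_num)] at hx
    linarith [hx.1]
  exact left.trans right

theorem Continuous.intervalIntegrable_mul_jacobiWeight {f : ℝ → ℝ} (hf : Continuous f)
    (hα : -1 < α) (hβ : -1 < β) :
    IntervalIntegrable (fun x => f x * jacobiWeight α β x) volume (-1) 1 :=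
  (intervalIntegrable_jacobiWeight hα hβ).continuousOn_mul hf.continuousOn

theorem hasDerivAt_one_sub_rpow_mul_one_add_rpow_mul {f : ℝ → ℝ} {f' x : ℝ}
    (hf : HasDerivAt f f' x) (hx : x ∈ Set.Ioo (-1 : ℝ) 1) :
    HasDerivAt (fun y => (1 - y) ^ (α + 1) * (1 + y) ^ (β + 1) * f y)
      ((((β + 1) * (1 - x) - (α + 1) * (1 + x)) * f x + (1 - x ^ 2) * f') *
        jacobiWeight α β x) x := by
  have hx₁ : 0 < 1 - x := by linarith [hx.2]
  have hx₂ : 0 < 1 + x := by linarith [hx.1]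
  have d₁ : HasDerivAt (fun y => (1 - y) ^ (α + 1)) (-((α + 1) * (1 - x) ^ α)) x := by
    convert ((hasDerivAt_id' x).const_sub 1).rpow_const (p := α + 1) (Or.inl hx₁.ne') using 1
    rw [add_sub_cancel_right]
    ring
  have d₂ : HasDerivAt (fun y => (1 + y) ^ (β + 1)) ((β + 1) * (1 + x) ^ β) x := by
    simpa using ((hasDerivAt_id' x).const_add 1).rpow_const (p := β + 1) (Or.inl hx₂.ne')
  refine ((d₁.mul d₂).mul hf).congr_deriv ?_
  simp only [jacobiWeight, Pi.mul_apply, Real.rpow_add_one hx₁.ne', Real.rpow_add_one hx₂.ne']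
  ring

theorem integral_deriv_one_sub_rpow_mul_one_add_rpow_mul_eval (hα : -1 < α) (hβ : -1 < β)
    (p : ℝ[X]) :
    ∫ x in (-1 : ℝ)..1, ((((β + 1) * (1 - x) - (α + 1) * (1 + x)) * p.eval x +
      (1 - x ^ 2) * (derivative p).eval x) * jacobiWeight α β x) = 0 := by
  have hcont : Continuous fun y : ℝ => (1 - y) ^ (α + 1) * (1 + y) ^ (β + 1) * p.eval y := by
    refine ((Continuous.rpow_const (by fun_prop) fun _ => Or.inr ?_).mul
      (Continuous.rpow_const (by fun_prop) fun _ => Or.inr ?_)).mul p.continuous <;> linarith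
  rw [intervalIntegral.integral_eq_sub_of_hasDerivAt_of_le (by norm_num) hcont.continuousOn
    (fun x hx => hasDerivAt_one_sub_rpow_mul_one_add_rpow_mul (p.hasDerivAt x) hx)
    ((by fun_prop : Continuous _).intervalIntegrable_mul_jacobiWeight hα hβ)]
  norm_num [Real.zero_rpow (show α + 1 ≠ 0 by linarith),
    Real.zero_rpow (show β + 1 ≠ 0 by linarith)]

theorem chebMomentInt_recurrence (hα : -1 < α) (hβ : -1 < β) (n : ℤ) :
    (α + β + n + 2) * chebMomentInt α β (n + 1) + 2 * (α - β) * chebMomentInt α β n +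
      (α + β - n + 2) * chebMomentInt α β (n - 1) = 0 := by
  have hintegrable (k : ℤ) : IntervalIntegrable (fun x => (T ℝ k).eval x * jacobiWeight α β x)
      volume (-1) 1 :=
    (T ℝ k).continuous.intervalIntegrable_mul_jacobiWeight hα hβ
  have hpointwise (x : ℝ) :
      (((β + 1) * (1 - x) - (α + 1) * (1 + x)) * (T ℝ n).eval x +
        (1 - x ^ 2) * (derivative (T ℝ n)).eval x) * jacobiWeight α β x =
      -((α + β + n + 2) / 2 * ((T ℝ (n + 1)).eval x * jacobiWeight α β x) +
        (α - β) * ((T ℝ n).eval x * jacobiWeight α β x) +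
        (α + β - n + 2) / 2 * ((T ℝ (n - 1)).eval x * jacobiWeight α β x)) := by
    have hderiv := congrArg (eval x) (one_sub_X_sq_mul_derivative_T ℝ n)
    have hrec := congrArg (eval x) (T_add_one ℝ n)
    simp only [eval_mul, eval_sub, eval_pow, eval_one, eval_X, eval_intCast, eval_ofNat]
      at hderiv hrec
    linear_combination jacobiWeight α β x * (hderiv + (α + β + n + 2) / 2 * hrec)
  have hzero := integral_deriv_one_sub_rpow_mul_one_add_rpow_mul_eval hα hβ (T ℝ n)
  simp only [hpointwise, intervalIntegral.integral_neg, neg_eq_zero] at hzero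
  rw [intervalIntegral.integral_add
      (((hintegrable _).const_mul _).add ((hintegrable _).const_mul _))
      ((hintegrable _).const_mul _),
    intervalIntegral.integral_add ((hintegrable _).const_mul _) ((hintegrable _).const_mul _)]
    at hzero
  simp only [intervalIntegral.integral_const_mul] at hzero
  simp only [chebMomentInt]
  linear_combination 2 * hzero

end Jacobi

/-- Three-term recurrence relation for the modified Chebyshev moments of the Jacobi weight. -/
theorem chebMoment_recurrence (α β : ℝ) (hα : -1 < α) (hβ : -1 < β) (l : ℕ) (hl : 1 ≤ l) :
    (α + β + (l : ℝ) + 2) * chebMoment α β (l + 1) + 2 * (α - β) * chebMoment α β l +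
      (α + β - (l : ℝ) + 2) * chebMoment α β (l - 1) = 0 := by
  simp only [chebMoment_eq_chebMomentInt, Nat.cast_add, Nat.cast_one, Nat.cast_sub hl]
  simpa using chebMomentInt_recurrence hα hβ l
end
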